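/- If ⟨M₁,M₂⟩ ⇒_E N, then there exist Q₁, Q₂ such that N x →_R* ⟨Q₁ x, Q₂ x⟩, M₁ ⇒_E Q₁, and M₂ ⇒_E Q₂. -/

import Mathlib

/-- Untyped lambda terms with pairing and projections, de Bruijn representation
(so terms are automatically identified up to alpha-equivalence). -/
inductive Tm : Type
  | var : Nat → Tm
  | app : Tm → Tm → Tm
  | lam : Tm → Tm
  | pair : Tm → Tm → Tm
  | p1 : Tm → Tm
  | p2 : Tm → Tm

/-- Shift free de Bruijn indices ≥ d up by one. -/
def Tm.lift (d : Nat) : Tm → Tm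
  | .var n => if n < d then .var n else .var (n + 1)
  | .app a b => .app (a.lift d) (b.lift d)
  | .lam a => .lam (a.lift (d + 1))
  | .pair a b => .pair (a.lift d) (b.lift d)
  | .p1 a => .p1 (a.lift d)
  | .p2 a => .p2 (a.lift d)

/-- Capture-avoiding substitution of s for variable k. -/
def Tm.subst : Tm → Nat → Tm → Tm
  | .var n, k, s => if n = k then s else if n < k then .var n else .var (n - 1)
  | .app a b, k, s => .app (a.subst k s) (b.subst k s)
  | .lam a, k, s => .lam (a.subst (k + 1) (s.lift 0))
  | .pair a b, k, s => .pair (a.subst k s) (b.subst k s)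
  | .p1 a, k, s => .p1 (a.subst k s)
  | .p2 a, k, s => .p2 (a.subst k s)

/-- One-step R-reduction: compatible closure of (β), (π₁), (π₂), (δπ), (π₁λ), (π₂λ). -/
inductive StepR : Tm → Tm → Prop
  | beta {M N} : StepR (.app (.lam M) N) (M.subst 0 N)
  | pi1 {M N} : StepR (.p1 (.pair M N)) M
  | pi2 {M N} : StepR (.p2 (.pair M N)) N
  | dpi {M N P} : StepR (.app (.pair M N) P) (.pair (.app M P) (.app N P))
  | pi1lam {M} : StepR (.p1 (.lam M)) (.lam (.p1 M))
  | pi2lam {M} : StepR (.p2 (.lam M)) (.lam (.p2 M))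
  | lam {M M'} : StepR M M' → StepR (.lam M) (.lam M')
  | appL {M M' N} : StepR M M' → StepR (.app M N) (.app M' N)
  | appR {M N N'} : StepR N N' → StepR (.app M N) (.app M N')
  | pairL {M M' N} : StepR M M' → StepR (.pair M N) (.pair M' N)
  | pairR {M N N'} : StepR N N' → StepR (.pair M N) (.pair M N')
  | p1 {M M'} : StepR M M' → StepR (.p1 M) (.p1 M')
  | p2 {M M'} : StepR M M' → StepR (.p2 M) (.p2 M')

/-- Parallel η/SP-expansion. -/
inductive ParE : Tm → Tm → Prop
  | refl {M} : ParE M M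
  | lam {M M'} : ParE M M' → ParE (.lam M) (.lam M')
  | app {M M' N N'} : ParE M M' → ParE N N' → ParE (.app M N) (.app M' N')
  | pair {M M' N N'} : ParE M M' → ParE N N' → ParE (.pair M N) (.pair M' N')
  | p1 {M M'} : ParE M M' → ParE (.p1 M) (.p1 M')
  | p2 {M M'} : ParE M M' → ParE (.p2 M) (.p2 M')
  | eta {M M'} : ParE M M' → ParE M (.lam (.app (M'.lift 0) (.var 0)))
  | sp {M M'} : ParE M M' → ParE M (.pair (.p1 M') (.p2 M'))

local infix:50 " ⟶* " => Relation.ReflTransGen StepR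

namespace Tm

theorem lift_lift (T : Tm) {i j : Nat} (hij : i ≤ j) :
    (T.lift i).lift (j + 1) = (T.lift j).lift i := by
  induction T generalizing i j with
  | var n => simp only [lift]; split_ifs <;> simp only [lift] <;> split_ifs <;> first | rfl | omega
  | app a b iha ihb => simp only [lift, iha hij, ihb hij]
  | lam a ih => simp only [lift, ih (Nat.succ_le_succ hij)]
  | pair a b iha ihb => simp only [lift, iha hij, ihb hij]
  | p1 a ih => simp only [lift, ih hij]
  | p2 a ih => simp only [lift, ih hij]

theorem subst_lift (T : Tm) (k : Nat) (s : Tm) : (T.lift k).subst k s = T := by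
  induction T generalizing k s with
  | var n => simp only [lift]; split_ifs <;> simp only [subst] <;> split_ifs <;> first | rfl | omega
  | app a b iha ihb => simp only [lift, subst, iha, ihb]
  | lam a ih => simp only [lift, subst, ih]
  | pair a b iha ihb => simp only [lift, subst, iha, ihb]
  | p1 a ih => simp only [lift, subst, ih]
  | p2 a ih => simp only [lift, subst, ih]

end Tm

theorem ParE.lift {M M' : Tm} (h : ParE M M') (d : Nat) : ParE (M.lift d) (M'.lift d) := by
  induction h generalizing d with
  | refl => exact .refl
  | lam _ ih => exact .lam (ih (d + 1))
  | app _ _ ih₁ ih₂ => exact .app (ih₁ d) (ih₂ d)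
  | pair _ _ ih₁ ih₂ => exact .pair (ih₁ d) (ih₂ d)
  | p1 _ ih => exact .p1 (ih d)
  | p2 _ ih => exact .p2 (ih d)
  | @eta _ A' _ ih =>
    have h : (Tm.lam (.app (A'.lift 0) (.var 0))).lift d
        = .lam (.app ((A'.lift d).lift 0) (.var 0)) := by
      simp only [Tm.lift, A'.lift_lift (Nat.zero_le d), Nat.zero_lt_succ, if_true]
    exact h ▸ .eta (ih d)
  | sp _ ih => exact .sp (ih d)

theorem StepR.beta_eta (N P : Tm) :
    StepR (.app (.lam (.app (N.lift 0) (.var 0))) P) (.app N P) := by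
  simpa only [Tm.subst, Tm.subst_lift, if_true] using @StepR.beta (.app (N.lift 0) (.var 0)) P

theorem StepR.app_p1_eta (N P : Tm) :
    .app (.p1 (.lam (.app (N.lift 0) (.var 0)))) P ⟶* .p1 (.app N P) := by
  refine .head (.appL .pi1lam) (.single ?_)
  simpa only [Tm.subst, Tm.subst_lift, if_true] using @StepR.beta (.p1 (.app (N.lift 0) (.var 0))) P

theorem StepR.app_p2_eta (N P : Tm) :
    .app (.p2 (.lam (.app (N.lift 0) (.var 0)))) P ⟶* .p2 (.app N P) := by
  refine .head (.appL .pi2lam) (.single ?_)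
  simpa only [Tm.subst, Tm.subst_lift, if_true] using @StepR.beta (.p2 (.app (N.lift 0) (.var 0))) P

theorem StepR.reflTransGen_pair {A A' B B' : Tm} (hA : A ⟶* A') (hB : B ⟶* B') :
    .pair A B ⟶* .pair A' B' :=
  (hA.lift (Tm.pair · B) fun _ _ => StepR.pairL).trans (hB.lift (Tm.pair A' ·) fun _ _ => StepR.pairR)

theorem StepR.reflTransGen_p1 {A A' : Tm} (h : A ⟶* A') : .p1 A ⟶* .p1 A' :=
  h.lift Tm.p1 fun _ _ => StepR.p1

theorem StepR.reflTransGen_p2 {A A' : Tm} (h : A ⟶* A') : .p2 A ⟶* .p2 A' :=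
  h.lift Tm.p2 fun _ _ => StepR.p2

/-- The projections have to be tracked as well: an SP-expansion `⟨π₁ N, π₂ N⟩` applied to `P`
reduces only through `π₁ N P` and `π₂ N P`. -/
theorem ParE.pair_app_reduces {M₁ M₂ N : Tm} (h : ParE (.pair M₁ M₂) N) (P : Tm) :
    ∃ Q₁ Q₂, ParE M₁ Q₁ ∧ ParE M₂ Q₂ ∧
      .app N P ⟶* .pair (.app Q₁ P) (.app Q₂ P) ∧
      .app (.p1 N) P ⟶* .app Q₁ P ∧ .app (.p2 N) P ⟶* .app Q₂ P := by
  generalize hS : Tm.pair M₁ M₂ = S at h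
  induction h with
  | refl =>
    subst hS
    exact ⟨M₁, M₂, .refl, .refl, .single .dpi, .single (.appL .pi1), .single (.appL .pi2)⟩
  | pair hA hB =>
    cases hS
    exact ⟨_, _, hA, hB, .single .dpi, .single (.appL .pi1), .single (.appL .pi2)⟩
  | lam | app | p1 | p2 => cases hS
  | eta _ ih =>
    obtain ⟨Q₁, Q₂, h₁, h₂, hN, -, -⟩ := ih hS
    exact ⟨Q₁, Q₂, h₁, h₂, .head (.beta_eta _ _) hN,
      (StepR.app_p1_eta _ _).trans ((StepR.reflTransGen_p1 hN).tail .pi1),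
      (StepR.app_p2_eta _ _).trans ((StepR.reflTransGen_p2 hN).tail .pi2)⟩
  | sp _ ih =>
    obtain ⟨Q₁, Q₂, h₁, h₂, -, hN₁, hN₂⟩ := ih hS
    exact ⟨Q₁, Q₂, h₁, h₂, .head .dpi (StepR.reflTransGen_pair hN₁ hN₂),
      .head (.appL .pi1) hN₁, .head (.appL .pi2) hN₂⟩

/-- The fresh variable `x` is de Bruijn index `0`; all other terms are lifted past it. -/
theorem parE_pair_app (M₁ M₂ N : Tm) (h : ParE (.pair M₁ M₂) N) :
    ∃ Q₁ Q₂, Relation.ReflTransGen StepR (.app (N.lift 0) (.var 0))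
        (.pair (.app Q₁ (.var 0)) (.app Q₂ (.var 0))) ∧
      ParE (M₁.lift 0) Q₁ ∧ ParE (M₂.lift 0) Q₂ := by
  obtain ⟨Q₁, Q₂, h₁, h₂, hN, -⟩ := (h.lift 0).pair_app_reduces (.var 0)
  exact ⟨Q₁, Q₂, hN, h₁, h₂⟩
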